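/- Let σ, δ₀ > 0 and fix z ∈ ℝ. The function h(y) = y·F(z,y) is differentiable on (0,1) with h'(y) = e^z · ((1−y)/y)^{σ²/δ₀} · (1 − (σ²/δ₀)/(1−y)) for all y ∈ (0,1). If in addition σ² ≥ δ₀, then h'(y) < 0 for every y ∈ (0,1), so y ↦ y·F(z,y) is strictly decreasing on (0,1). -/

import Mathlib

open Set Real

/-- The transformation `F(z,y) = e^z ((1−y)/y)^{σ²/δ₀}`. -/
noncomputable def F (σ δ₀ z y : ℝ) : ℝ := Real.exp z * ((1 - y) / y) ^ (σ ^ 2 / δ₀)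

theorem stmt_4 (σ δ₀ z : ℝ) (hσ : 0 < σ) (hδ₀ : 0 < δ₀) :
    (∀ y ∈ Ioo (0 : ℝ) 1,
      HasDerivAt (fun y' => y' * F σ δ₀ z y')
        (Real.exp z * ((1 - y) / y) ^ (σ ^ 2 / δ₀) * (1 - (σ ^ 2 / δ₀) / (1 - y))) y) ∧
    (σ ^ 2 ≥ δ₀ →
      (∀ y ∈ Ioo (0 : ℝ) 1, deriv (fun y' => y' * F σ δ₀ z y') y < 0) ∧
      StrictAntiOn (fun y => y * F σ δ₀ z y) (Ioo (0 : ℝ) 1)) := by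
  set α := σ ^ 2 / δ₀ with hα
  have hαpos : 0 < α := div_pos (pow_pos hσ 2) hδ₀
  have key : ∀ y ∈ Ioo (0 : ℝ) 1,
      HasDerivAt (fun y' => y' * F σ δ₀ z y')
        (Real.exp z * ((1 - y) / y) ^ α * (1 - α / (1 - y))) y := by
    intro y hy
    obtain ⟨hy0, hy1⟩ := hy
    have h1y : 0 < 1 - y := by linarith
    have hu : 0 < (1 - y) / y := div_pos h1y hy0
    have hf : HasDerivAt (fun y' : ℝ => (1 - y') / y') (-1 / y ^ 2) y := by
      have h := ((hasDerivAt_const y (1:ℝ)).sub (hasDerivAt_id y)).div (hasDerivAt_id y) hy0.ne'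
      simp only [id, Pi.sub_def, Pi.div_def] at h
      refine h.congr_deriv ?_
      ring
    have hg : HasDerivAt (fun y' : ℝ => ((1 - y') / y') ^ α)
        ((-1 / y ^ 2) * α * ((1 - y) / y) ^ (α - 1)) y :=
      hf.rpow_const (Or.inl hu.ne')
    have hF : HasDerivAt (fun y' => y' * F σ δ₀ z y')
        (1 * (Real.exp z * ((1 - y) / y) ^ α)
          + y * (Real.exp z * ((-1 / y ^ 2) * α * ((1 - y) / y) ^ (α - 1)))) y := by
      exact (hasDerivAt_id y).mul ((hg.const_mul (Real.exp z)))
    convert hF using 1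
    have hpow : ((1 - y) / y) ^ (α - 1) = ((1 - y) / y) ^ α * (y / (1 - y)) := by
      rw [Real.rpow_sub hu, Real.rpow_one, div_eq_mul_inv, inv_div]
    rw [hpow]
    field_simp
    ring
  refine ⟨key, fun hge => ?_⟩
  have hneg : ∀ y ∈ Ioo (0 : ℝ) 1, deriv (fun y' => y' * F σ δ₀ z y') y < 0 := by
    intro y hy
    obtain ⟨hy0, hy1⟩ := hy
    have h1y : 0 < 1 - y := by linarith
    have hu : 0 < (1 - y) / y := div_pos h1y hy0
    rw [(key y ⟨hy0, hy1⟩).deriv]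
    have hα1 : 1 ≤ α := (one_le_div hδ₀).mpr hge
    have : 1 < α / (1 - y) := by
      rw [lt_div_iff₀ h1y]; nlinarith
    have hfac : 1 - α / (1 - y) < 0 := by linarith
    have hposf : 0 < Real.exp z * ((1 - y) / y) ^ α :=
      mul_pos (Real.exp_pos z) (Real.rpow_pos_of_pos hu α)
    exact mul_neg_of_pos_of_neg hposf hfac
  refine ⟨hneg, ?_⟩
  apply strictAntiOn_of_deriv_neg (convex_Ioo 0 1)
  · exact fun y hy => ((key y hy).differentiableAt.continuousAt).continuousWithinAt
  · intro y hy
    rw [interior_Ioo] at hy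
    exact hneg y hy
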